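/- The closure of the graph of the polar map is an irreducible component of Z_f: With notation as in the context, the vanishing ideal P := I(Γ) ⊆ T of the set Γ is a prime ideal of T, and P is a minimal prime over the ideal I_{Z_f}; equivalently, the Zariski closure of Γ (the affine cone over the closure S_f of the graph of the polar map ∇f : ℙⁿ ⇢ ℙⁿ) is an irreducible component of the zero set of I_{Z_f} (the affine cone over Z_f). -/

import Mathlib

/-! The cone `Γ` is the image of `(x, t) ↦ (x, t·∇f(x))`, so its ideal is the kernel of the
pullback to the domain `ℂ[x, t]` and is prime. The syzygies `∂ⱼf·eᵢ - ∂ᵢf·eⱼ` put the `2 × 2`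
minors of `(∇f(x); y)` into `I_{Z_f}`, and off the hypersurface `∂ᵢf = 0` these minors cut
out exactly `Γ`. Hence for a prime `I_{Z_f} ⊆ Q ⊆ P` and `g ∈ P`, the product `g·∂ᵢf` vanishes
on `V(Q)`, so lies in `Q` by the Nullstellensatz; since `∂ᵢf ∉ P` for some `i` (Euler's
identity, `f` being homogeneous of positive degree), `g ∈ Q`. -/

open MvPolynomial

noncomputable section

/-- The ideal `I_{Z_f}` of `T = ℂ[x_0,…,x_n,y_0,…,y_n]` generated by the bihomogeneous
forms `∑ a_i(x)·y_i` as `a` ranges over the Jacobian syzygies of `f`. -/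
def idealZf (n : ℕ) (f : MvPolynomial (Fin (n + 1)) ℂ) :
    Ideal (MvPolynomial (Fin (n + 1) ⊕ Fin (n + 1)) ℂ) :=
  Ideal.span {g | ∃ a : Fin (n + 1) → MvPolynomial (Fin (n + 1)) ℂ,
    (∑ i, a i * pderiv i f = 0) ∧
    g = ∑ i, rename Sum.inl (a i) * X (Sum.inr i)}

/-- The affine cone over the graph of the polar map `∇f`: the set
`Γ = {(x, t·∇f(x)) : x ∈ ℂ^{n+1}, t ∈ ℂ} ⊆ ℂ^{2(n+1)}`. -/
def polarGraphCone (n : ℕ) (f : MvPolynomial (Fin (n + 1)) ℂ) :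
    Set ((Fin (n + 1) ⊕ Fin (n + 1)) → ℂ) :=
  {z | ∃ (x : Fin (n + 1) → ℂ) (t : ℂ),
    z = Sum.elim x fun i => t * eval x (pderiv i f)}

namespace MvPolynomial

variable {K σ ι : Type*} [Field K] (φ : ι → MvPolynomial σ K)

def graphCone : Set (σ ⊕ ι → K) :=
  {z | ∃ (x : σ → K) (t : K), z = Sum.elim x fun i => t * eval x (φ i)}

/-- Pullback along the parametrization `(x, t) ↦ (x, t·φ(x))` of `graphCone φ`; the variable
`Sum.inr ()` is `t`. -/
def graphConeHom : MvPolynomial (σ ⊕ ι) K →ₐ[K] MvPolynomial (σ ⊕ Unit) K :=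
  aeval (Sum.elim (fun s => X (Sum.inl s)) fun i => X (Sum.inr ()) * rename Sum.inl (φ i))

lemma eval_graphConeHom (g : MvPolynomial (σ ⊕ ι) K) (x : σ → K) (t : K) :
    eval (Sum.elim x fun _ => t) (graphConeHom φ g) =
      eval (Sum.elim x fun i => t * eval x (φ i)) g := by
  have h : (aeval (Sum.elim x fun _ => t)).comp (graphConeHom φ) =
      aeval (Sum.elim x fun i => t * eval x (φ i)) := by
    ext (s | i) <;> simp [graphConeHom, eval_rename, Sum.elim_comp_inl]
  simpa only [AlgHom.comp_apply, aeval_eq_eval] using DFunLike.congr_fun h g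

lemma graphConeHom_rename_inl (p : MvPolynomial σ K) :
    graphConeHom φ (rename Sum.inl p) = rename Sum.inl p := by
  have h : (graphConeHom φ).comp (rename Sum.inl) = rename Sum.inl := by
    ext s; simp [graphConeHom]
  exact DFunLike.congr_fun h p

lemma vanishingIdeal_graphCone [Infinite K] :
    vanishingIdeal K (graphCone φ) = RingHom.ker (graphConeHom φ) := by
  ext g
  rw [RingHom.mem_ker, mem_vanishingIdeal_iff]
  constructor
  · intro hg
    refine MvPolynomial.funext fun w => ?_
    have hw : w = Sum.elim (w ∘ Sum.inl) fun _ => w (Sum.inr ()) := by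
      ext (_ | _) <;> rfl
    rw [hw, eval_graphConeHom, map_zero, ← aeval_eq_eval]
    exact hg _ ⟨_, _, rfl⟩
  · rintro hg _ ⟨x, t, rfl⟩
    rw [aeval_eq_eval, ← eval_graphConeHom, hg, map_zero]

lemma isPrime_vanishingIdeal_graphCone [Infinite K] :
    (vanishingIdeal K (graphCone φ)).IsPrime := by
  rw [vanishingIdeal_graphCone]
  exact RingHom.ker_isPrime _

lemma rename_inl_mem_vanishingIdeal_graphCone_iff [Infinite K] {p : MvPolynomial σ K} :
    rename Sum.inl p ∈ vanishingIdeal K (graphCone φ) ↔ p = 0 := by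
  rw [vanishingIdeal_graphCone, RingHom.mem_ker, graphConeHom_rename_inl,
    map_eq_zero_iff _ (rename_injective _ Sum.inl_injective)]

def graphMinor (i j : ι) : MvPolynomial (σ ⊕ ι) K :=
  rename Sum.inl (φ j) * X (Sum.inr i) - rename Sum.inl (φ i) * X (Sum.inr j)

lemma mem_graphCone_of_eval_graphMinor {z : σ ⊕ ι → K} {i : ι}
    (hi : eval (z ∘ Sum.inl) (φ i) ≠ 0) (hz : ∀ j, eval z (graphMinor φ i j) = 0) :
    z ∈ graphCone φ := by
  refine ⟨z ∘ Sum.inl, z (Sum.inr i) / eval (z ∘ Sum.inl) (φ i), ?_⟩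
  ext (s | j)
  · rfl
  · have hj := hz j
    simp only [graphMinor, map_sub, map_mul, eval_X, eval_rename, sub_eq_zero] at hj
    rw [Sum.elim_inr]
    field_simp
    linear_combination -hj

theorem vanishingIdeal_graphCone_mem_minimalPrimes [IsAlgClosed K] [Finite σ] [Finite ι]
    {J : Ideal (MvPolynomial (σ ⊕ ι) K)} (hJ : ∀ i j, graphMinor φ i j ∈ J)
    (hJP : J ≤ vanishingIdeal K (graphCone φ)) (hφ : φ ≠ 0) :
    vanishingIdeal K (graphCone φ) ∈ J.minimalPrimes := by
  refine ⟨⟨isPrime_vanishingIdeal_graphCone φ, hJP⟩, fun Q ⟨hQ, hJQ⟩ hQP g hg => ?_⟩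
  obtain ⟨i, hi⟩ := Function.ne_iff.mp hφ
  have hmul : g * rename Sum.inl (φ i) ∈ Q := by
    rw [← hQ.radical, ← vanishingIdeal_zeroLocus_eq_radical (K := K), mem_vanishingIdeal_iff]
    intro z hz
    rw [mem_zeroLocus_iff] at hz
    by_cases hzi : eval (z ∘ Sum.inl) (φ i) = 0
    · simp [aeval_eq_eval, eval_rename, hzi]
    · have hzΓ := mem_graphCone_of_eval_graphMinor φ hzi fun j => hz _ (hJQ (hJ i j))
      rw [map_mul, mem_vanishingIdeal_iff.mp hg z hzΓ, zero_mul]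
  exact (hQ.mem_or_mem hmul).resolve_right fun h =>
    hi ((rename_inl_mem_vanishingIdeal_graphCone_iff φ).mp (hQP h))

theorem IsHomogeneous.exists_pderiv_ne_zero {R : Type*} [CommRing R] [IsDomain R] [CharZero R]
    [Fintype σ] {f : MvPolynomial σ R} {d : ℕ} (hf : f.IsHomogeneous d) (hd : d ≠ 0)
    (hf0 : f ≠ 0) : ∃ i, pderiv i f ≠ 0 := by
  by_contra! h
  have euler := hf.sum_X_mul_pderiv
  simp only [h, mul_zero, Finset.sum_const_zero] at euler
  exact hf0 ((smul_eq_zero.mp euler.symm).resolve_left hd)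

end MvPolynomial

lemma graphMinor_pderiv_mem_idealZf (n : ℕ) (f : MvPolynomial (Fin (n + 1)) ℂ)
    (i j : Fin (n + 1)) : graphMinor (fun k => pderiv k f) i j ∈ idealZf n f := by
  refine Ideal.subset_span
    ⟨fun k => (if k = i then pderiv j f else 0) - (if k = j then pderiv i f else 0), ?_, ?_⟩
  · simp only [sub_mul, Finset.sum_sub_distrib, ite_mul, zero_mul, Finset.sum_ite_eq',
      Finset.mem_univ, if_true]
    ring
  · simp only [graphMinor, map_sub, sub_mul, Finset.sum_sub_distrib, apply_ite (rename Sum.inl),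
      map_zero, ite_mul, zero_mul, Finset.sum_ite_eq', Finset.mem_univ, if_true]

lemma idealZf_le_vanishingIdeal_polarGraphCone (n : ℕ) (f : MvPolynomial (Fin (n + 1)) ℂ) :
    idealZf n f ≤ vanishingIdeal ℂ (polarGraphCone n f) := by
  rw [idealZf, Ideal.span_le]
  rintro _ ⟨a, ha, rfl⟩ _ ⟨x, t, rfl⟩
  calc aeval (Sum.elim x fun i => t * eval x (pderiv i f))
        (∑ i, rename Sum.inl (a i) * X (Sum.inr i))
      = t * eval x (∑ i, a i * pderiv i f) := by
        simp [aeval_eq_eval, eval_rename, Sum.elim_comp_inl, Finset.mul_sum, mul_comm,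
          mul_left_comm]
    _ = 0 := by rw [ha, map_zero, mul_zero]

theorem polarGraph_irreducible_component_general (n d : ℕ) (hd : 1 ≤ d)
    (f : MvPolynomial (Fin (n + 1)) ℂ) (hsf : Squarefree f) (hhom : f.IsHomogeneous d) :
    (vanishingIdeal ℂ (polarGraphCone n f)).IsPrime ∧
      vanishingIdeal ℂ (polarGraphCone n f) ∈ (idealZf n f).minimalPrimes := by
  obtain ⟨i, hi⟩ := hhom.exists_pderiv_ne_zero (by omega) hsf.ne_zero
  exact ⟨isPrime_vanishingIdeal_graphCone _,
    vanishingIdeal_graphCone_mem_minimalPrimes _ (graphMinor_pderiv_mem_idealZf n f)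
      (idealZf_le_vanishingIdeal_polarGraphCone n f) (Function.ne_iff.mpr ⟨i, hi⟩)⟩

/-- **The closure of the graph of the polar map is an irreducible component of `Z_f`.**
The vanishing ideal `P = I(Γ)` of the cone over the graph of the polar map is a prime ideal
of `T`, and it is a minimal prime over `I_{Z_f}`; i.e. the Zariski closure of `Γ` (the cone
over `S_f`) is an irreducible component of the zero set of `I_{Z_f}` (the cone over `Z_f`). -/
theorem polarGraph_irreducible_component (n d : ℕ) (hn : 1 ≤ n) (hd : 1 ≤ d)
    (f : MvPolynomial (Fin (n + 1)) ℂ) (hsf : Squarefree f) (hhom : f.IsHomogeneous d) :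
    (vanishingIdeal ℂ (polarGraphCone n f)).IsPrime ∧
      vanishingIdeal ℂ (polarGraphCone n f) ∈ (idealZf n f).minimalPrimes :=
  polarGraph_irreducible_component_general n d hd f hsf hhom

end
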